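/- arXiv:1805.04673 — 3 statements merged into one kernel-verified Lean document; each statement's English description precedes it below -/
import Mathlib

section
/- Let N be an odd positive integer and θ ∈ (0, π/2]. Then the spectrum of the 2N×2N unitary matrix U_psw(θ) is exactly the set of all 2N-th roots of unity {exp(πik/N) : k = 0, 1, …, 2N−1}, and every eigenvalue is simple. In particular the spectrum is independent of θ. -/
/-!
For each `2N`-th root of unity `ζ` there is an explicit eigenvector `(a, b)` of `U_psw(θ)`.
With `c = cos θ`, `s = sin θ`, the second block row forces `b_n = s ω^n a_n / (ζ + c ω^n)`
(the denominator is nonzero because `|c| < 1 = |ζ|`), and then, using `c² + s² = 1`, the first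
block row becomes the recursion `a_{n+1} = a_n (c ζ + ω^n) / (ζ (ζ + c ω^n))`. For odd `N` one
has `∏_{m<N} (u + v ω^m) = u^N + v^N`, so going once around the cycle multiplies `a` by
`(c^N ζ^N + 1) / (ζ^N (ζ^N + c^N)) = 1`, as `ζ^{2N} = 1`. Hence the monic characteristic
polynomial of degree `2N` vanishes at all `2N` distinct `2N`-th roots of unity: it is
`X^{2N} - 1`.
-/
open Complex

/-- `ω = exp(2πi/N)`. -/
noncomputable def omegaN (N : ℕ) : ℂ := Complex.exp (2 * Real.pi * Complex.I / N)

/-- The phase-space quantum walk operator `U_psw(θ)`, a `2N × 2N` matrix indexed by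
(coin, walker) pairs, with block form `[[cosθ·T, sinθ·T],[sinθ·T̃, −cosθ·T̃]]`,
where `T` is the cyclic shift (`T|n⟩ = |n+1⟩`) and `T̃` the diagonal matrix with
`T̃|n⟩ = ω^n|n⟩`. -/
noncomputable def Upsw (N : ℕ) (θ : ℝ) :
    Matrix (Fin 2 × ZMod N) (Fin 2 × ZMod N) ℂ := fun p q =>
  if p.1 = 0 then
    (if q.1 = 0 then (Real.cos θ : ℂ) else (Real.sin θ : ℂ)) *
      (if p.2 = q.2 + 1 then 1 else 0)
  else
    (if q.1 = 0 then (Real.sin θ : ℂ) else (-Real.cos θ : ℂ)) *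
      (if p.2 = q.2 then omegaN N ^ (q.2.val) else 0)

open Polynomial
open scoped Matrix

theorem IsPrimitiveRoot.prod_add_mul_pow_of_odd {R : Type*} [CommRing R] [IsDomain R]
    {ω : R} {N : ℕ} (hω : IsPrimitiveRoot ω N) (hN : Odd N) (u v : R) :
    ∏ m ∈ Finset.range N, (u + v * ω ^ m) = u ^ N + v ^ N := by
  have h := congrArg (eval u) (X_pow_sub_C_eq_prod hω hN.pos (hN.neg_pow v))
  simp only [eval_sub, eval_pow, eval_X, eval_C, eval_prod, sub_neg_eq_add] at h
  rw [h]
  exact Finset.prod_congr rfl fun m _ => by ring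

theorem Polynomial.eq_X_pow_sub_one_of_forall_isRoot {R : Type*} [CommRing R] [IsDomain R]
    {ζ : R} {n : ℕ} (hζ : IsPrimitiveRoot ζ n) (hn : 0 < n) {p : R[X]} (hp : p.Monic)
    (hdeg : p.natDegree = n) (hroot : ∀ z : R, z ^ n = 1 → p.IsRoot z) :
    p = X ^ n - 1 := by
  have hpdeg : p.degree = n := by rw [degree_eq_natDegree hp.ne_zero, hdeg]
  refine eq_of_degree_sub_lt_of_eval_finset_eq (nthRootsFinset n (1 : R)) ?_ fun z hz => ?_
  · rw [hζ.card_nthRootsFinset, ← hpdeg]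
    refine degree_sub_lt_left ?_ hp.ne_zero ?_
    · rw [hpdeg, ← C_1, degree_X_pow_sub_C hn]
    · rw [hp.leadingCoeff, leadingCoeff_X_pow_sub_one hn]
  · rw [mem_nthRootsFinset hn] at hz
    simp [(hroot z hz).eq_zero, hz]

theorem ZMod.apply_val_add_one {α : Type*} {N : ℕ} [NeZero N] {f : ℕ → α} (hf : f N = f 0)
    (m : ZMod N) : f (m + 1).val = f (m.val + 1) := by
  have hval : (m + 1).val = (m.val + 1) % N := by
    rw [← ZMod.val_natCast, Nat.cast_add_one, ZMod.natCast_zmod_val]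
  rw [hval]
  rcases (Nat.add_one_le_of_lt m.val_lt).lt_or_eq with h | h
  · rw [Nat.mod_eq_of_lt h]
  · rw [h, Nat.mod_self, hf]

noncomputable def pswAmplitude {K : Type*} [Field K] (c ω ζ : K) (k : ℕ) : K :=
  ∏ m ∈ Finset.range k, (c * ζ + ω ^ m) / (ζ * (ζ + c * ω ^ m))

theorem pswAmplitude_succ {K : Type*} [Field K] (c ω ζ : K) (k : ℕ) :
    pswAmplitude c ω ζ (k + 1) =
      pswAmplitude c ω ζ k * ((c * ζ + ω ^ k) / (ζ * (ζ + c * ω ^ k))) :=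
  Finset.prod_range_succ _ k

theorem pswAmplitude_self {K : Type*} [Field K] {c ω ζ : K} {N : ℕ}
    (hω : IsPrimitiveRoot ω N) (hN : Odd N) (hζ : ζ ^ (2 * N) = 1)
    (hden : ∀ m, ζ + c * ω ^ m ≠ 0) : pswAmplitude c ω ζ N = 1 := by
  have hζ0 : ζ ≠ 0 := by rintro rfl; simp [hN.pos.ne'] at hζ
  have hnum : ∏ m ∈ Finset.range N, (c * ζ + ω ^ m) = (c * ζ) ^ N + 1 := by
    simpa using hω.prod_add_mul_pow_of_odd hN (c * ζ) 1
  have hdenom : ∏ m ∈ Finset.range N, (ζ + c * ω ^ m) = ζ ^ N + c ^ N :=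
    hω.prod_add_mul_pow_of_odd hN ζ c
  have hdenom0 : ζ ^ N + c ^ N ≠ 0 :=
    hdenom ▸ Finset.prod_ne_zero_iff.mpr fun m _ => hden m
  rw [pswAmplitude, Finset.prod_div_distrib, Finset.prod_mul_distrib, Finset.prod_const,
    Finset.card_range, hnum, hdenom, div_eq_one_iff_eq (mul_ne_zero (pow_ne_zero N hζ0) hdenom0)]
  linear_combination (-1 : K) * hζ

theorem Complex.X_pow_sub_one_eq_prod_exp {n : ℕ} (hn : n ≠ 0) :
    (X ^ n - 1 : ℂ[X]) =
      ∏ k ∈ Finset.range n, (X - C (exp (2 * Real.pi * I * k / n))) := by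
  rw [← C_1, X_pow_sub_C_eq_prod (isPrimitiveRoot_exp n hn) (Nat.pos_of_ne_zero hn) (one_pow n)]
  refine Finset.prod_congr rfl fun k _ => ?_
  rw [mul_one, ← exp_nat_mul]
  ring_nf

theorem isPrimitiveRoot_omegaN (N : ℕ) [NeZero N] : IsPrimitiveRoot (omegaN N) N :=
  Complex.isPrimitiveRoot_exp N (NeZero.ne N)

namespace Upsw

variable {N : ℕ} [NeZero N] {θ : ℝ}

theorem mulVec_apply_zero (v : Fin 2 × ZMod N → ℂ) (n : ZMod N) :
    (Upsw N θ *ᵥ v) (0, n) = Real.cos θ * v (0, n - 1) + Real.sin θ * v (1, n - 1) := by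
  simp only [Matrix.mulVec, dotProduct, Fintype.sum_prod_type, Fin.sum_univ_two, Upsw]
  simp [eq_comm (a := n), ← eq_sub_iff_add_eq]

theorem mulVec_apply_one (v : Fin 2 × ZMod N → ℂ) (n : ZMod N) :
    (Upsw N θ *ᵥ v) (1, n) =
      omegaN N ^ n.val * (Real.sin θ * v (0, n) - Real.cos θ * v (1, n)) := by
  simp only [Matrix.mulVec, dotProduct, Fintype.sum_prod_type, Fin.sum_univ_two, Upsw]
  simp only [one_ne_zero, ↓reduceIte, mul_ite, mul_zero, ite_mul, zero_mul,
    Finset.sum_ite_eq, Finset.mem_univ]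
  ring

noncomputable def eigenvector (N : ℕ) (θ : ℝ) (ζ : ℂ) (p : Fin 2 × ZMod N) : ℂ :=
  let a := pswAmplitude (Real.cos θ : ℂ) (omegaN N) ζ p.2.val
  if p.1 = 0 then a
  else Real.sin θ * omegaN N ^ p.2.val * a / (ζ + Real.cos θ * omegaN N ^ p.2.val)

theorem add_cos_mul_omegaN_pow_ne_zero (hθ : Real.sin θ ≠ 0) {ζ : ℂ} (hζ : ‖ζ‖ = 1)
    (m : ℕ) :
    ζ + Real.cos θ * omegaN N ^ m ≠ 0 := by
  have hcos : |Real.cos θ| < 1 := by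
    rw [← sq_lt_one_iff_abs_lt_one]
    nlinarith [Real.sin_sq_add_cos_sq θ, sq_pos_of_ne_zero hθ]
  intro h
  have hω : ‖omegaN N‖ = 1 :=
    Complex.norm_eq_one_of_pow_eq_one (isPrimitiveRoot_omegaN N).pow_eq_one (NeZero.ne N)
  have := congrArg norm (eq_neg_of_add_eq_zero_left h)
  rw [hζ, norm_neg, norm_mul, norm_pow, hω, one_pow, mul_one, Complex.norm_real,
    Real.norm_eq_abs] at this
  linarith

theorem mulVec_eigenvector (hN : Odd N) (hθ : Real.sin θ ≠ 0) {ζ : ℂ}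
    (hζ : ζ ^ (2 * N) = 1) :
    Upsw N θ *ᵥ eigenvector N θ ζ = ζ • eigenvector N θ ζ := by
  have hden := add_cos_mul_omegaN_pow_ne_zero (N := N) hθ
    (Complex.norm_eq_one_of_pow_eq_one hζ (mul_pos two_pos hN.pos).ne')
  have hζ0 : ζ ≠ 0 := by rintro rfl; simp [hN.pos.ne'] at hζ
  have hcs : (Real.cos θ : ℂ) ^ 2 + (Real.sin θ : ℂ) ^ 2 = 1 := by
    exact_mod_cast Real.cos_sq_add_sin_sq θ
  have hper : pswAmplitude (Real.cos θ : ℂ) (omegaN N) ζ N =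
      pswAmplitude (Real.cos θ : ℂ) (omegaN N) ζ 0 := by
    rw [pswAmplitude_self (isPrimitiveRoot_omegaN N) hN hζ hden, pswAmplitude,
      Finset.prod_range_zero]
  rw [funext_iff, Prod.forall, Fin.forall_fin_two]
  refine ⟨fun n => ?_, fun n => ?_⟩
  · obtain ⟨m, rfl⟩ : ∃ m, n = m + 1 := ⟨n - 1, (sub_add_cancel n 1).symm⟩
    rw [mulVec_apply_zero, add_sub_cancel_right]
    simp only [eigenvector, Pi.smul_apply, smul_eq_mul, if_true, one_ne_zero, if_false]
    rw [ZMod.apply_val_add_one hper, pswAmplitude_succ]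
    have := hden m.val
    field_simp
    linear_combination
      (omegaN N ^ m.val * pswAmplitude (Real.cos θ : ℂ) (omegaN N) ζ m.val) * hcs
  · rw [mulVec_apply_one]
    simp only [eigenvector, Pi.smul_apply, smul_eq_mul, if_true, one_ne_zero, if_false]
    linear_combination -div_mul_cancel₀ (Real.sin θ * omegaN N ^ n.val *
      pswAmplitude (Real.cos θ : ℂ) (omegaN N) ζ n.val) (hden n.val)

theorem isRoot_charpoly (hN : Odd N) (hθ : Real.sin θ ≠ 0) {ζ : ℂ} (hζ : ζ ^ (2 * N) = 1) :
    (Upsw N θ).charpoly.IsRoot ζ := by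
  rw [IsRoot.def, Matrix.eval_charpoly, ← Matrix.exists_mulVec_eq_zero_iff]
  refine ⟨eigenvector N θ ζ, fun h => ?_, ?_⟩
  · simpa [eigenvector, pswAmplitude] using congrFun h (0, 0)
  · rw [Matrix.sub_mulVec, mulVec_eigenvector hN hθ hζ, sub_eq_zero]
    ext p
    simp [Matrix.scalar_apply, Matrix.mulVec_diagonal]

theorem charpoly_eq_X_pow_sub_one (hN : Odd N) (hθ : Real.sin θ ≠ 0) :
    (Upsw N θ).charpoly = X ^ (2 * N) - 1 := by
  have h2N : 2 * N ≠ 0 := (mul_pos two_pos hN.pos).ne'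
  refine eq_X_pow_sub_one_of_forall_isRoot (Complex.isPrimitiveRoot_exp _ h2N)
    (Nat.pos_of_ne_zero h2N) (Matrix.charpoly_monic _) ?_ fun _ => isRoot_charpoly hN hθ
  rw [Matrix.charpoly_natDegree_eq_dim]
  simp [ZMod.card]

end Upsw

/-- for odd `N` and `θ ∈ (0, π/2]`, the spectrum of `U_psw(θ)` is exactly
the set of all `2N`-th roots of unity `{exp(πik/N) : 0 ≤ k < 2N}`, and every eigenvalue
is simple (the characteristic polynomial splits into distinct linear factors, one for
each `2N`-th root of unity).  In particular the spectrum does not depend on `θ`. -/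
theorem psw_spectrum_odd (N : ℕ) [NeZero N] (hN : Odd N)
    (θ : ℝ) (hθ : θ ∈ Set.Ioc 0 (Real.pi / 2)) :
    spectrum ℂ (Upsw N θ)
      = {z : ℂ | ∃ k : ℕ, k < 2 * N ∧ z = Complex.exp (Real.pi * Complex.I * k / N)} ∧
    (Upsw N θ).charpoly
      = ∏ k ∈ Finset.range (2 * N),
          (Polynomial.X - Polynomial.C (Complex.exp (Real.pi * Complex.I * k / N))) := by
  have hsin : Real.sin θ ≠ 0 :=
    (Real.sin_pos_of_pos_of_lt_pi hθ.1 (by linarith [hθ.2, Real.pi_pos])).ne'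
  have hcharpoly : (Upsw N θ).charpoly = ∏ k ∈ Finset.range (2 * N),
      (X - C (Complex.exp (Real.pi * Complex.I * k / N))) := by
    rw [Upsw.charpoly_eq_X_pow_sub_one hN hsin,
      Complex.X_pow_sub_one_eq_prod_exp (mul_pos two_pos hN.pos).ne']
    refine Finset.prod_congr rfl fun k _ => ?_
    push_cast
    field_simp
  refine ⟨?_, hcharpoly⟩
  ext z
  rw [Matrix.mem_spectrum_iff_isRoot_charpoly, hcharpoly, isRoot_prod]
  simp [sub_eq_zero]
end

section
/- Let N be an odd positive integer and k ∈ {0, 1, …, 2N−1}. Then the vector v ∈ ℂ^(2N) with components v_{(0,n)} = exp(iπ(n² − n − 2nk)/N) and v_{(1,n)} = exp(iπ(n² + n − 2kn − k)/N), for 0 ≤ n ≤ N−1, satisfies U_psw(π/2)·v = exp(πik/N)·v. In particular every component of v has modulus 1. -/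
open Complex

/-!
Put `e(a) = exp(iπa/N)`, a character of `ℤ/2Nℤ`, so that `ω^n = e(2n)`. At `θ = π/2` the walk
acts by `(Uv)(0,n) = v(1,n-1)` and `(Uv)(1,n) = ωⁿ v(0,n)`. The second eigen-equation is an exact
identity of exponents. For the first, both sides are `e(f(x))` with `f(x) = x² - (2k+1)x + k`,
evaluated at `x = (n-1).val + 1` and at `x = n.val`, which agree only mod `N`; since `N` and `2k+1`
are odd, `x² + cx = x(x+c)` is well defined mod `2N` on residues mod `N`.
-/

theorem Int.sq_add_mul_modEq_of_odd {N c a b : ℤ} (hN : Odd N) (hc : Odd c)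
    (h : a ≡ b [ZMOD N]) : a ^ 2 + c * a ≡ b ^ 2 + c * b [ZMOD 2 * N] := by
  -- `(a - b) + (a + b + c) = 2a + c` is odd, so one of the two factors is even.
  have htwo : 2 ∣ (a - b) * (a + b + c) := by
    refine even_iff_two_dvd.mp ?_
    rcases Int.even_or_odd (a - b) with heven | hodd
    · exact heven.mul_right _
    · have hsum : a + b + c = (2 * a + c) - (a - b) := by ring
      rw [hsum]
      exact (((even_two_mul a).add_odd hc).sub_odd hodd).mul_left _
  obtain ⟨m, rfl⟩ := hN
  have hcop : IsCoprime (2 : ℤ) (2 * m + 1) := ⟨-m, 1, by ring⟩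
  have hdiff : 2 * (2 * m + 1) ∣ (a - b) * (a + b + c) :=
    hcop.mul_dvd htwo ((Int.ModEq.dvd h.symm).mul_right _)
  exact (Int.modEq_iff_dvd.mpr (by convert hdiff using 1; ring)).symm

noncomputable def phase (N : ℕ) (a : ℤ) : ℂ := exp (I * Real.pi * (a : ℝ) / N)

theorem phase_add (N : ℕ) (a b : ℤ) : phase N (a + b) = phase N a * phase N b := by
  rw [phase, phase, phase, ← exp_add]
  congr 1
  push_cast
  ring

theorem phase_congr {N : ℕ} [NeZero N] {a b : ℤ} (h : a ≡ b [ZMOD 2 * N]) :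
    phase N a = phase N b := by
  obtain ⟨t, ht⟩ := (Int.modEq_iff_dvd.mp h.symm)
  have hperiod : phase N (t * (2 * N)) = 1 := by
    have hN : (N : ℂ) ≠ 0 := NeZero.ne _
    rw [phase, ← exp_int_mul_two_pi_mul_I t]
    congr 1
    push_cast
    field_simp
  rw [show a = b + t * (2 * N) by linarith, phase_add, hperiod, mul_one]

theorem norm_phase (N : ℕ) (a : ℤ) : ‖phase N a‖ = 1 := by
  rw [phase, show I * Real.pi * ((a : ℝ) : ℂ) / N = ((Real.pi * a / N : ℝ) : ℂ) * I by
    push_cast; ring]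
  exact norm_exp_ofReal_mul_I _

theorem omegaN_pow (N j : ℕ) : omegaN N ^ j = phase N (2 * j) := by
  rw [omegaN, phase, ← exp_nat_mul]
  congr 1
  push_cast
  ring

theorem Upsw_mulVec_zero (N : ℕ) [NeZero N] (θ : ℝ) (v : Fin 2 × ZMod N → ℂ) (n : ZMod N) :
    (Upsw N θ).mulVec v (0, n) = Real.cos θ * v (0, n - 1) + Real.sin θ * v (1, n - 1) := by
  have hshift : ∀ m : ZMod N, n = m + 1 ↔ m = n - 1 := fun m => by
    rw [eq_sub_iff_add_eq, eq_comm]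
  simp [Matrix.mulVec, dotProduct, Fintype.sum_prod_type, Upsw, hshift]

theorem Upsw_mulVec_one (N : ℕ) [NeZero N] (θ : ℝ) (v : Fin 2 × ZMod N → ℂ) (n : ZMod N) :
    (Upsw N θ).mulVec v (1, n) =
      omegaN N ^ n.val * (Real.sin θ * v (0, n) - Real.cos θ * v (1, n)) := by
  simp [Matrix.mulVec, dotProduct, Fintype.sum_prod_type, Upsw]
  ring

noncomputable def pswEigvec (N k : ℕ) (p : Fin 2 × ZMod N) : ℂ :=
  let n : ℤ := p.2.val
  if p.1 = 0 then phase N (n ^ 2 - n - 2 * n * k) else phase N (n ^ 2 + n - 2 * k * n - k)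

@[simp]
theorem pswEigvec_zero (N k : ℕ) (n : ZMod N) :
    pswEigvec N k (0, n) = phase N ((n.val : ℤ) ^ 2 - n.val - 2 * n.val * k) := rfl

@[simp]
theorem pswEigvec_one (N k : ℕ) (n : ZMod N) :
    pswEigvec N k (1, n) = phase N ((n.val : ℤ) ^ 2 + n.val - 2 * k * n.val - k) := rfl

theorem norm_pswEigvec (N k : ℕ) (p : Fin 2 × ZMod N) : ‖pswEigvec N k p‖ = 1 := by
  unfold pswEigvec
  split_ifs <;> exact norm_phase _ _

theorem ZMod.val_sub_one_add_one_modEq {N : ℕ} [NeZero N] (n : ZMod N) :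
    ((n - 1).val : ℤ) + 1 ≡ n.val [ZMOD N] := by
  rw [← ZMod.intCast_eq_intCast_iff]
  push_cast [ZMod.natCast_val, ZMod.cast_id]
  ring

theorem Upsw_pi_div_two_mulVec_pswEigvec {N : ℕ} [NeZero N] (hN : Odd N) (k : ℕ) :
    (Upsw N (Real.pi / 2)).mulVec (pswEigvec N k) = phase N k • pswEigvec N k := by
  funext ⟨c, n⟩
  fin_cases c
  · simp only [Fin.zero_eta, Upsw_mulVec_zero, Real.cos_pi_div_two, Real.sin_pi_div_two,
      Complex.ofReal_zero, Complex.ofReal_one, zero_mul, one_mul, zero_add, Pi.smul_apply,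
      smul_eq_mul, pswEigvec_zero, pswEigvec_one, ← phase_add]
    apply phase_congr
    have hquad := (Int.sq_add_mul_modEq_of_odd (c := -(2 * k + 1)) hN.natCast
      ⟨-(k + 1 : ℤ), by ring⟩ n.val_sub_one_add_one_modEq).add_right (k : ℤ)
    convert hquad using 1 <;> ring
  · simp only [Fin.mk_one, Upsw_mulVec_one, Real.cos_pi_div_two, Real.sin_pi_div_two,
      Complex.ofReal_zero, Complex.ofReal_one, zero_mul, one_mul, sub_zero, Pi.smul_apply,
      smul_eq_mul, pswEigvec_zero, pswEigvec_one, omegaN_pow, ← phase_add]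
    congr 1
    ring

theorem psw_theta_pi_half_eigenvectors_general (N : ℕ) [NeZero N] (hN : Odd N)
    (k : ℕ)
    (v : Fin 2 × ZMod N → ℂ)
    (hv0 : ∀ n : ZMod N,
      v (0, n) = Complex.exp (Complex.I * Real.pi *
        (((n.val : ℤ) ^ 2 - n.val - 2 * n.val * k : ℤ) : ℝ) / N))
    (hv1 : ∀ n : ZMod N,
      v (1, n) = Complex.exp (Complex.I * Real.pi *
        (((n.val : ℤ) ^ 2 + n.val - 2 * k * n.val - k : ℤ) : ℝ) / N)) :
    (Upsw N (Real.pi / 2)).mulVec v = Complex.exp (Real.pi * Complex.I * k / N) • v ∧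
    ∀ p : Fin 2 × ZMod N, ‖v p‖ = 1 := by
  have hv : v = pswEigvec N k := by
    funext ⟨c, n⟩
    fin_cases c
    exacts [hv0 n, hv1 n]
  have heigval : Complex.exp (Real.pi * Complex.I * k / N) = phase N k := by
    rw [phase]
    push_cast
    ring_nf
  subst hv
  exact ⟨heigval ▸ Upsw_pi_div_two_mulVec_pswEigvec hN k, norm_pswEigvec N k⟩

/-- for odd `N` and `0 ≤ k < 2N`, the vector with components
`v(0,n) = exp(iπ(n² − n − 2nk)/N)` and `v(1,n) = exp(iπ(n² + n − 2kn − k)/N)` is an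
eigenvector of `U_psw(π/2)` with eigenvalue `exp(πik/N)`; every component has
modulus `1`. -/
theorem psw_theta_pi_half_eigenvectors (N : ℕ) [NeZero N] (hN : Odd N)
    (k : ℕ) (hk : k < 2 * N)
    (v : Fin 2 × ZMod N → ℂ)
    (hv0 : ∀ n : ZMod N,
      v (0, n) = Complex.exp (Complex.I * Real.pi *
        (((n.val : ℤ) ^ 2 - n.val - 2 * n.val * k : ℤ) : ℝ) / N))
    (hv1 : ∀ n : ZMod N,
      v (1, n) = Complex.exp (Complex.I * Real.pi *
        (((n.val : ℤ) ^ 2 + n.val - 2 * k * n.val - k : ℤ) : ℝ) / N)) :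
    (Upsw N (Real.pi / 2)).mulVec v = Complex.exp (Real.pi * Complex.I * k / N) • v ∧
    ∀ p : Fin 2 × ZMod N, ‖v p‖ = 1 :=
  psw_theta_pi_half_eigenvectors_general N hN k v hv0 hv1
end

section
/- Let N be an odd positive integer, θ ∈ (0, π/2), k ∈ {0, 1, …, 2N−1}, and λ_k = exp(πik/N). Then Σ_{n=0}^{N−1} ( |a_n(λ_k)|² + |b_n(λ_k)|² ) = 2N / (1 + (−1)^k · cos^N θ). -/
open Complex

/-- `a_n(λ) = ω^(−n(n−1)/2) · ∏_{j=0}^{n−1} (1 + λ⁻¹ωʲ/cosθ)/(1 + λω⁻ʲ/cosθ)`. -/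
noncomputable def aCoef (N : ℕ) (θ : ℝ) (lam : ℂ) (n : ℕ) : ℂ :=
  (omegaN N)⁻¹ ^ (n * (n - 1) / 2) *
    ∏ j ∈ Finset.range n,
      (1 + lam⁻¹ * omegaN N ^ j / (Real.cos θ : ℂ)) /
      (1 + lam * (omegaN N)⁻¹ ^ j / (Real.cos θ : ℂ))

/-- `b_n(λ) = a_n(λ)·tanθ/(1 + λω⁻ⁿ/cosθ)`. -/
noncomputable def bCoef (N : ℕ) (θ : ℝ) (lam : ℂ) (n : ℕ) : ℂ :=
  aCoef N θ lam n * (Real.tan θ : ℂ) / (1 + lam * (omegaN N)⁻¹ ^ n / (Real.cos θ : ℂ))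

/-!
Each factor in the product defining `a_n` has the form `conj z / z`, so `|a_n| = 1`. With
`c = cos θ` and `u_n = λ ω⁻ⁿ` on the unit circle, `|1 + u_n / c|²` factors as
`(1 + c u_n)(1 + c u_n⁻¹) / c²`, and partial fractions turn `|b_n|²` into a combination of
`1 / (1 + c λ ω⁻ⁿ)` and `1 / (1 + c λ⁻¹ ωⁿ)`. For `N` odd, summing `1 / (1 + x ζⁿ)` over the
`N`-th roots of unity gives `N / (1 + x^N)`, and `λ^N = λ^(-N) = (-1)^k`, so both sums equal
`N / (1 + (-1)^k c^N)`. Finally `tan²θ · c² = 1 - c²`.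
-/

open Finset

section RootsOfUnity

variable {K : Type*} [Field K] {ζ : K} {N : ℕ}

lemma IsPrimitiveRoot.geom_sum_pow_eq_zero (hζ : IsPrimitiveRoot ζ N) {j : ℕ} (hj0 : j ≠ 0)
    (hjN : j < N) : ∑ n ∈ range N, (ζ ^ j) ^ n = 0 := by
  have hne : ζ ^ j - 1 ≠ 0 := sub_ne_zero.mpr (hζ.pow_ne_one_of_pos_of_lt hj0 hjN)
  have h := geom_sum_mul (ζ ^ j) N
  rw [pow_right_comm, hζ.pow_eq_one, one_pow, sub_self] at h
  exact (mul_eq_zero.mp h).resolve_right hne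

/-- Expanding each term as a geometric series in `x ζⁿ`, only the constant terms survive the
sum over `n`. -/
lemma IsPrimitiveRoot.sum_inv_one_sub_mul_pow (hζ : IsPrimitiveRoot ζ N) {x : K}
    (hx : x ^ N ≠ 1) :
    ∑ n ∈ range N, (1 - x * ζ ^ n)⁻¹ = N / (1 - x ^ N) := by
  have hpow : ∀ n, (x * ζ ^ n) ^ N = x ^ N := fun n => by
    rw [mul_pow, ← pow_mul, mul_comm n, pow_mul, hζ.pow_eq_one, one_pow, mul_one]
  have hterm : ∀ n, (1 - x ^ N) * (1 - x * ζ ^ n)⁻¹ = ∑ j ∈ range N, x ^ j * (ζ ^ j) ^ n := by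
    intro n
    have hden : 1 - x * ζ ^ n ≠ 0 := fun h => hx (by rw [← hpow n, ← sub_eq_zero.mp h, one_pow])
    rw [← hpow n, ← mul_neg_geom_sum, mul_comm (1 - x * ζ ^ n), mul_assoc, mul_inv_cancel₀ hden,
      mul_one]
    simp only [mul_pow, ← pow_mul, mul_comm n]
  rw [eq_div_iff (sub_ne_zero.mpr hx.symm), mul_comm, mul_sum, sum_congr rfl fun n _ => hterm n,
    sum_comm, sum_eq_single 0]
  · simp
  · intro j hj hj0
    rw [← mul_sum, hζ.geom_sum_pow_eq_zero hj0 (mem_range.mp hj), mul_zero]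
  · intro h0
    rcases N.eq_zero_or_pos with rfl | hN
    · exact absurd (pow_zero x) hx
    · exact absurd (mem_range.mpr hN) h0

lemma IsPrimitiveRoot.sum_inv_one_add_mul_pow (hζ : IsPrimitiveRoot ζ N) (hN : Odd N) {x : K}
    (hx : x ^ N ≠ -1) :
    ∑ n ∈ range N, (1 + x * ζ ^ n)⁻¹ = N / (1 + x ^ N) := by
  have h := hζ.sum_inv_one_sub_mul_pow (x := -x)
    (by rw [hN.neg_pow]; exact fun h => hx (by linear_combination -h))
  simpa [hN.neg_pow] using h

end RootsOfUnity

lemma inv_one_add_mul_one_add_mul_one_sub_mul {K : Type*} [Field K] {x y : K} (hx : 1 + x ≠ 0)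
    (hy : 1 + y ≠ 0) : ((1 + x) * (1 + y))⁻¹ * (1 - x * y) = (1 + x)⁻¹ + (1 + y)⁻¹ - 1 := by
  field_simp
  ring

lemma one_sub_sq_ne_zero_of_abs_lt_one {c : ℝ} (hc : |c| < 1) : 1 - c ^ 2 ≠ 0 :=
  sub_ne_zero.mpr ((sq_lt_one_iff_abs_lt_one c).mpr hc).ne'

lemma one_add_mul_pow_ne_zero_of_abs_eq_one {ε c : ℝ} {N : ℕ} (hε : |ε| = 1) (hc : |c| < 1)
    (hN : N ≠ 0) :
    1 + ε * c ^ N ≠ 0 := by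
  intro h
  have h' := congrArg abs (show ε * c ^ N = -1 by linarith)
  rw [abs_mul, hε, one_mul, abs_pow, abs_neg, abs_one] at h'
  exact (pow_lt_one₀ (abs_nonneg c) hc hN).ne h'

section UnitCircle

variable {u : ℂ} {c : ℝ}

lemma one_add_div_ofReal_ne_zero (hu : ‖u‖ = 1) (hc : |c| < 1) : 1 + u / c ≠ 0 := by
  intro h
  have h' := congrArg norm (show u / c = -1 by linear_combination h)
  rw [norm_div, hu, Complex.norm_real, Real.norm_eq_abs, norm_neg, norm_one, one_div,
    inv_eq_one] at h'
  linarith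

lemma one_add_ofReal_mul_ne_zero (hu : ‖u‖ = 1) (hc : |c| < 1) : 1 + c * u ≠ 0 := by
  intro h
  have h' := congrArg norm (show c * u = -1 by linear_combination h)
  rw [norm_mul, hu, Complex.norm_real, Real.norm_eq_abs, norm_neg, norm_one, mul_one] at h'
  linarith

lemma conj_one_add_div_ofReal (hu : ‖u‖ = 1) :
    (starRingEnd ℂ) (1 + u / c) = 1 + u⁻¹ / c := by
  rw [map_add, map_one, map_div₀, Complex.conj_ofReal, ← Complex.inv_eq_conj hu]

lemma inv_normSq_one_add_div_ofReal (hu : ‖u‖ = 1) (hc0 : c ≠ 0) (hc : |c| < 1) :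
    ((Complex.normSq (1 + u / c))⁻¹ : ℂ) =
      c ^ 2 / (1 - c ^ 2) * ((1 + c * u)⁻¹ + (1 + c * u⁻¹)⁻¹ - 1) := by
  have hu0 : u ≠ 0 := by rintro rfl; simp at hu
  have h1 : (1 : ℂ) - c ^ 2 ≠ 0 := by exact_mod_cast one_sub_sq_ne_zero_of_abs_lt_one hc
  have hfactor : (starRingEnd ℂ) (1 + u / c) * (1 + u / c) =
      (1 + c * u) * (1 + c * u⁻¹) / c ^ 2 := by
    rw [conj_one_add_div_ofReal hu]
    field_simp [Complex.ofReal_ne_zero.mpr hc0]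
    ring
  rw [Complex.normSq_eq_conj_mul_self, hfactor, inv_div, ← inv_one_add_mul_one_add_mul_one_sub_mul
    (one_add_ofReal_mul_ne_zero hu hc)
    (one_add_ofReal_mul_ne_zero (by rw [norm_inv, hu, inv_one]) hc)]
  field_simp

end UnitCircle

lemma sum_inv_normSq_one_add_mul_pow_div_ofReal {N : ℕ} (hN : Odd N) {ζ : ℂ}
    (hζ : IsPrimitiveRoot ζ N) {lam : ℂ} (hlam : ‖lam‖ = 1) {ε : ℝ} (hε : lam ^ N = ε) {c : ℝ}
    (hc0 : c ≠ 0) (hc : |c| < 1) :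
    ∑ n ∈ range N, (Complex.normSq (1 + lam * ζ ^ n / c))⁻¹ =
      c ^ 2 * N * (1 - ε * c ^ N) / ((1 - c ^ 2) * (1 + ε * c ^ N)) := by
  have hεabs : |ε| = 1 := by
    rw [← Real.norm_eq_abs, ← Complex.norm_real, ← hε, norm_pow, hlam, one_pow]
  have hden := one_add_mul_pow_ne_zero_of_abs_eq_one hεabs hc hN.pos.ne'
  have hsum : ∀ ξ x : ℂ, IsPrimitiveRoot ξ N → x ^ N = ε →
      ∑ n ∈ range N, (1 + c * x * ξ ^ n)⁻¹ = N / (1 + ε * c ^ N) := fun ξ x hξ hx => by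
    have hcx : (c * x) ^ N ≠ -1 := by
      rw [mul_pow, hx]
      exact fun h => hden (by exact_mod_cast (by linear_combination h : (1 : ℂ) + ε * c ^ N = 0))
    rw [hξ.sum_inv_one_add_mul_pow hN hcx, mul_pow, hx, mul_comm]
  have hinv : lam⁻¹ ^ N = ε := by
    rw [Complex.inv_eq_conj hlam, ← map_pow, hε, Complex.conj_ofReal]
  have hterm : ∀ n, ((Complex.normSq (1 + lam * ζ ^ n / c))⁻¹ : ℂ) =
      c ^ 2 / (1 - c ^ 2) * ((1 + c * lam * ζ ^ n)⁻¹ + (1 + c * lam⁻¹ * ζ⁻¹ ^ n)⁻¹ - 1) := by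
    intro n
    have hu : ‖lam * ζ ^ n‖ = 1 := by
      rw [norm_mul, norm_pow, hlam, Complex.norm_eq_one_of_pow_eq_one hζ.pow_eq_one hN.pos.ne',
        one_pow, one_mul]
    rw [inv_normSq_one_add_div_ofReal hu hc0 hc, mul_inv, inv_pow, mul_assoc, mul_assoc]
  apply Complex.ofReal_injective
  push_cast
  rw [sum_congr rfl fun n _ => hterm n, ← mul_sum, sum_sub_distrib, sum_add_distrib,
    hsum _ _ hζ hε, hsum _ _ hζ.inv hinv]
  have h1 : (1 : ℂ) - c ^ 2 ≠ 0 := by exact_mod_cast one_sub_sq_ne_zero_of_abs_lt_one hc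
  have h2 : (1 : ℂ) + ε * c ^ N ≠ 0 := by exact_mod_cast hden
  simp only [sum_const, card_range, nsmul_eq_mul, mul_one]
  field_simp
  ring

lemma norm_omegaN (N : ℕ) : ‖omegaN N‖ = 1 := by
  rw [omegaN, show 2 * Real.pi * Complex.I / N = ((2 * Real.pi / N : ℝ) : ℂ) * Complex.I by
    push_cast; ring]
  exact Complex.norm_exp_ofReal_mul_I _

section Coefficients

variable {N : ℕ} {θ : ℝ} {lam : ℂ}

lemma norm_lam_mul_inv_omegaN_pow (hlam : ‖lam‖ = 1) (n : ℕ) :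
    ‖lam * (omegaN N)⁻¹ ^ n‖ = 1 := by
  rw [norm_mul, norm_pow, norm_inv, norm_omegaN, inv_one, one_pow, hlam, one_mul]

lemma norm_aCoef (hlam : ‖lam‖ = 1) (hθ : |Real.cos θ| < 1) (n : ℕ) :
    ‖aCoef N θ lam n‖ = 1 := by
  rw [aCoef, norm_mul, norm_pow, norm_inv, norm_omegaN, inv_one, one_pow, one_mul, norm_prod]
  refine prod_eq_one fun j _ => ?_
  have hu := norm_lam_mul_inv_omegaN_pow (N := N) hlam j
  rw [show lam⁻¹ * omegaN N ^ j = (lam * (omegaN N)⁻¹ ^ j)⁻¹ by rw [mul_inv, inv_pow, inv_inv],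
    ← conj_one_add_div_ofReal hu, norm_div, Complex.norm_conj,
    div_self (norm_ne_zero_iff.mpr (one_add_div_ofReal_ne_zero hu hθ))]

lemma sq_norm_bCoef (hlam : ‖lam‖ = 1) (hθ : |Real.cos θ| < 1) (n : ℕ) :
    ‖bCoef N θ lam n‖ ^ 2 =
      Real.tan θ ^ 2 / Complex.normSq (1 + lam * (omegaN N)⁻¹ ^ n / Real.cos θ) := by
  rw [bCoef, norm_div, norm_mul, norm_aCoef hlam hθ, one_mul, Complex.norm_real,
    Real.norm_eq_abs, div_pow, sq_abs, Complex.sq_norm]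

end Coefficients

theorem psw_normalization_odd_general (N : ℕ) (hN : Odd N)
    (θ : ℝ) (hθ : θ ∈ Set.Ioo 0 (Real.pi / 2))
    (k : ℕ)
    (lam : ℂ) (hlam : lam = Complex.exp (Real.pi * Complex.I * k / N)) :
    ∑ n ∈ Finset.range N,
        (‖aCoef N θ lam n‖ ^ 2 + ‖bCoef N θ lam n‖ ^ 2)
      = 2 * N / (1 + (-1 : ℝ) ^ k * Real.cos θ ^ N) := by
  obtain ⟨hθ0, hθ2⟩ := hθ
  have hcos0 : 0 < Real.cos θ := Real.cos_pos_of_mem_Ioo ⟨by linarith [Real.pi_pos], hθ2⟩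
  have hcos1 : |Real.cos θ| < 1 := (sq_lt_one_iff_abs_lt_one _).mp <| by
    nlinarith [Real.sin_sq θ, Real.sin_pos_of_pos_of_lt_pi hθ0 (by linarith [Real.pi_pos])]
  have hlam1 : ‖lam‖ = 1 := by
    rw [hlam, show Real.pi * Complex.I * k / N = ((Real.pi * k / N : ℝ) : ℂ) * Complex.I by
      push_cast; ring]
    exact Complex.norm_exp_ofReal_mul_I _
  have hlamN : lam ^ N = ((-1 : ℝ) ^ k : ℝ) := by
    have hN0 : (N : ℂ) ≠ 0 := Nat.cast_ne_zero.mpr hN.pos.ne'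
    rw [hlam, ← Complex.exp_nat_mul,
      show N * (Real.pi * Complex.I * k / N) = k * (Real.pi * Complex.I) by field_simp,
      Complex.exp_nat_mul, Complex.exp_pi_mul_I]
    push_cast; rfl
  have hζ : IsPrimitiveRoot (omegaN N)⁻¹ N := (Complex.isPrimitiveRoot_exp N hN.pos.ne').inv
  have hden := one_add_mul_pow_ne_zero_of_abs_eq_one (ε := (-1) ^ k) (by simp) hcos1 hN.pos.ne'
  calc ∑ n ∈ Finset.range N, (‖aCoef N θ lam n‖ ^ 2 + ‖bCoef N θ lam n‖ ^ 2)
      = ∑ n ∈ Finset.range N,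
          (1 + Real.tan θ ^ 2 / Complex.normSq (1 + lam * (omegaN N)⁻¹ ^ n / Real.cos θ)) :=
        sum_congr rfl fun n _ => by rw [norm_aCoef hlam1 hcos1, sq_norm_bCoef hlam1 hcos1, one_pow]
    _ = N + Real.tan θ ^ 2 * ∑ n ∈ Finset.range N,
          (Complex.normSq (1 + lam * (omegaN N)⁻¹ ^ n / Real.cos θ))⁻¹ := by
        simp only [sum_add_distrib, sum_const, card_range, nsmul_eq_mul, mul_one, mul_sum,
          div_eq_mul_inv]
    _ = 2 * N / (1 + (-1 : ℝ) ^ k * Real.cos θ ^ N) := by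
        rw [sum_inv_normSq_one_add_mul_pow_div_ofReal hN hζ hlam1 hlamN hcos0.ne' hcos1,
          Real.tan_eq_sin_div_cos, div_pow, Real.sin_sq]
        have := one_sub_sq_ne_zero_of_abs_lt_one hcos1
        field_simp
        ring

/-- for odd `N`, `θ ∈ (0, π/2)`, `0 ≤ k < 2N` and `λ_k = exp(πik/N)`,
`Σ_{n=0}^{N−1} (|a_n(λ_k)|² + |b_n(λ_k)|²) = 2N / (1 + (−1)ᵏ·cosᴺθ)`. -/
theorem psw_normalization_odd (N : ℕ) [NeZero N] (hN : Odd N)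
    (θ : ℝ) (hθ : θ ∈ Set.Ioo 0 (Real.pi / 2))
    (k : ℕ) (hk : k < 2 * N)
    (lam : ℂ) (hlam : lam = Complex.exp (Real.pi * Complex.I * k / N)) :
    ∑ n ∈ Finset.range N,
        (‖aCoef N θ lam n‖ ^ 2 + ‖bCoef N θ lam n‖ ^ 2)
      = 2 * N / (1 + (-1 : ℝ) ^ k * Real.cos θ ^ N) :=
  psw_normalization_odd_general N hN θ hθ k lam hlam
end
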